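/- Let A be an irreducible n×n max-plus matrix (n ≥ 1) and let λ(A) be its maximum cycle mean. Then there exist l ≥ 0 and c ≥ 1 such that for all k ≥ l and all i j : Fin n, (A^⊗(k+c)) i j = λ(A)·c + (A^⊗k) i j, the equality holding in WithBot ℝ (with ε + r = ε). The smallest such l and c are called the transient and the cyclicity of A. -/

import Mathlib

/-- Max-plus matrix product: `(A ⊗ B) i j = max_k (A i k + B k j)`. -/
def mpMul {n : ℕ} (A B : Matrix (Fin n) (Fin n) (WithBot ℝ)) :
    Matrix (Fin n) (Fin n) (WithBot ℝ) :=
  fun i j => Finset.univ.sup fun k => A i k + B k j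

/-- Max-plus identity matrix: `0` on the diagonal, `ε = ⊥` elsewhere. -/
def mpId (n : ℕ) : Matrix (Fin n) (Fin n) (WithBot ℝ) :=
  fun i j => if i = j then ((0 : ℝ) : WithBot ℝ) else ⊥

/-- Max-plus matrix power `A^⊗m`. -/
def mpPow {n : ℕ} (A : Matrix (Fin n) (Fin n) (WithBot ℝ)) :
    ℕ → Matrix (Fin n) (Fin n) (WithBot ℝ)
  | 0 => mpId n
  | m + 1 => mpMul A (mpPow A m)

/-- `A` is irreducible: its precedence graph is strongly connected, i.e. for
all `i j` there is a path `i₀ = j, i₁, …, i_m = i` (`m ≥ 1`) with all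
traversed entries finite. -/
def MPIrreducible {n : ℕ} (A : Matrix (Fin n) (Fin n) (WithBot ℝ)) : Prop :=
  ∀ i j : Fin n, ∃ m : ℕ, 1 ≤ m ∧ ∃ p : ℕ → Fin n,
    p 0 = j ∧ p m = i ∧ ∀ t < m, A (p (t + 1)) (p t) ≠ ⊥

/-- `μ` is the mean of some circuit of the precedence graph of `A`. -/
def IsCycleMean {n : ℕ} (A : Matrix (Fin n) (Fin n) (WithBot ℝ)) (μ : ℝ) : Prop :=
  ∃ m : ℕ, 1 ≤ m ∧ ∃ p : ℕ → Fin n, ∃ w : ℕ → ℝ,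
    p m = p 0 ∧ (∀ t < m, A (p (t + 1)) (p t) = ((w t : ℝ) : WithBot ℝ)) ∧
    μ = (∑ t ∈ Finset.range m, w t) / m

/-- `lam` is the maximum cycle mean `λ(A)` of `A`. -/
def IsMaxCycleMean {n : ℕ} (A : Matrix (Fin n) (Fin n) (WithBot ℝ)) (lam : ℝ) : Prop :=
  IsCycleMean A lam ∧ ∀ μ : ℝ, IsCycleMean A μ → μ ≤ lam

namespace MPAux

variable {n : ℕ}

/-- weight of the walk `p 0 → p 1 → ⋯ → p m` -/
def wk (A : Matrix (Fin n) (Fin n) (WithBot ℝ)) (p : ℕ → Fin n) (m : ℕ) : WithBot ℝ :=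
  ∑ t ∈ Finset.range m, A (p (t + 1)) (p t)

def OKw (A : Matrix (Fin n) (Fin n) (WithBot ℝ)) (p : ℕ → Fin n) (m : ℕ) : Prop :=
  ∀ t < m, A (p (t + 1)) (p t) ≠ ⊥

lemma wk_zero (A : Matrix (Fin n) (Fin n) (WithBot ℝ)) (p : ℕ → Fin n) : wk A p 0 = 0 := by
  simp [wk]

lemma wk_succ (A : Matrix (Fin n) (Fin n) (WithBot ℝ)) (p : ℕ → Fin n) (m : ℕ) :
    wk A p (m + 1) = wk A p m + A (p (m + 1)) (p m) := by
  simp [wk, Finset.sum_range_succ]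

lemma wk_congr {A : Matrix (Fin n) (Fin n) (WithBot ℝ)} {p q : ℕ → Fin n} {m : ℕ}
    (h : ∀ t ≤ m, p t = q t) : wk A p m = wk A q m := by
  unfold wk
  refine Finset.sum_congr rfl fun t ht => ?_
  rw [Finset.mem_range] at ht
  rw [h t (le_of_lt ht), h (t + 1) (by omega)]

/-- any walk weight is ≤ the corresponding power entry -/
lemma wk_le_pow (A : Matrix (Fin n) (Fin n) (WithBot ℝ)) (p : ℕ → Fin n) :
    ∀ m, wk A p m ≤ mpPow A m (p m) (p 0) := by
  intro m
  induction m with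
  | zero => simp [wk, mpPow, mpId]
  | succ m ih =>
    have h1 : A (p (m + 1)) (p m) + mpPow A m (p m) (p 0) ≤ mpPow A (m + 1) (p (m + 1)) (p 0) := by
      show _ ≤ Finset.univ.sup fun k => A (p (m + 1)) k + mpPow A m k (p 0)
      exact Finset.le_sup (f := fun k => A (p (m + 1)) k + mpPow A m k (p 0)) (Finset.mem_univ (p m))
    calc wk A p (m + 1) = wk A p m + A (p (m + 1)) (p m) := wk_succ A p m
    _ ≤ mpPow A m (p m) (p 0) + A (p (m + 1)) (p m) := add_le_add_left ih _
    _ = A (p (m + 1)) (p m) + mpPow A m (p m) (p 0) := add_comm _ _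
    _ ≤ _ := h1

/-- power entries are attained by walks -/
lemma pow_attained (hn : 1 ≤ n) (A : Matrix (Fin n) (Fin n) (WithBot ℝ)) (m : ℕ) (i j : Fin n) :
    mpPow A m i j = ⊥ ∨ ∃ p : ℕ → Fin n, p 0 = j ∧ p m = i ∧ wk A p m = mpPow A m i j := by
  induction m generalizing i with
  | zero =>
    by_cases h : i = j
    · subst h; exact Or.inr ⟨fun _ => i, rfl, rfl, by simp [wk, mpPow, mpId]⟩
    · left; simp [mpPow, mpId, h]
  | succ m ih =>
    have : Nonempty (Fin n) := ⟨⟨0, hn⟩⟩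
    have hne : (Finset.univ : Finset (Fin n)).Nonempty := Finset.univ_nonempty
    obtain ⟨k0, -, hk0⟩ := Finset.exists_mem_eq_sup Finset.univ hne
      (fun k => A i k + mpPow A m k j)
    by_cases hb : mpPow A (m + 1) i j = ⊥
    · exact Or.inl hb
    right
    have hEq : mpPow A (m + 1) i j = A i k0 + mpPow A m k0 j := hk0
    rw [hEq] at hb
    rw [WithBot.add_eq_bot] at hb
    push_neg at hb
    rcases ih k0 with h | ⟨p, hp0, hpm, hw⟩
    · exact absurd h hb.2
    refine ⟨fun t => if t ≤ m then p t else i, hp0 ▸ by simp, by simp, ?_⟩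
    have hagree : ∀ t ≤ m, (fun t => if t ≤ m then p t else i) t = p t := fun t ht => if_pos ht
    rw [wk_succ, wk_congr hagree]
    rw [if_neg (by omega), if_pos le_rfl, hw, hpm, hEq, add_comm]
lemma ok_of_wk_ne_bot {A : Matrix (Fin n) (Fin n) (WithBot ℝ)} {p : ℕ → Fin n} {m : ℕ}
    (h : wk A p m ≠ ⊥) : OKw A p m := by
  intro t ht hbot
  apply h
  unfold wk
  have : ∀ s : Finset ℕ, t ∈ s → (∑ u ∈ s, A (p (u + 1)) (p u)) = ⊥ := by
    intro s hts
    rw [← Finset.add_sum_erase s _ hts, hbot]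
    rfl
  exact this _ (Finset.mem_range.mpr ht)
end MPAux

namespace MPAux

variable {n : ℕ}

def wkR (A : Matrix (Fin n) (Fin n) (WithBot ℝ)) (p : ℕ → Fin n) (m : ℕ) : ℝ :=
  ∑ t ∈ Finset.range m, (A (p (t + 1)) (p t)).unbotD 0

lemma wk_eq_coe {A : Matrix (Fin n) (Fin n) (WithBot ℝ)} {p : ℕ → Fin n} {m : ℕ}
    (hOK : OKw A p m) : wk A p m = ((wkR A p m : ℝ) : WithBot ℝ) := by
  unfold wk wkR
  push_cast
  refine Finset.sum_congr rfl fun t ht => ?_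
  rw [Finset.mem_range] at ht
  have := hOK t ht
  cases hx : A (p (t + 1)) (p t) with
  | bot => exact absurd hx this
  | coe r => rfl

lemma closed_wk_le {A : Matrix (Fin n) (Fin n) (WithBot ℝ)} {lam : ℝ}
    (hlam : IsMaxCycleMean A lam) {p : ℕ → Fin n} {m : ℕ} (hm : 1 ≤ m)
    (hclosed : p m = p 0) (hOK : OKw A p m) :
    wk A p m ≤ ((lam * m : ℝ) : WithBot ℝ) := by
  have hcm : IsCycleMean A (wkR A p m / m) := by
    refine ⟨m, hm, p, fun t => (A (p (t + 1)) (p t)).unbotD 0, hclosed, fun t ht => ?_, rfl⟩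
    have := hOK t ht
    cases hx : A (p (t + 1)) (p t) with
    | bot => exact absurd hx this
    | coe r => simp [hx]
  have hle : wkR A p m / m ≤ lam := hlam.2 _ hcm
  have : wkR A p m ≤ lam * m := by
    rw [div_le_iff₀ (by positivity)] at hle; exact hle
  rw [wk_eq_coe hOK]
  exact_mod_cast this

lemma wk_split {A : Matrix (Fin n) (Fin n) (WithBot ℝ)} (p : ℕ → Fin n) {t0 m : ℕ}
    (h : t0 ≤ m) :
    wk A p m = wk A p t0 + wk A (fun s => p (t0 + s)) (m - t0) := by
  have hm : m = t0 + (m - t0) := by omega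
  conv_lhs => rw [hm]
  unfold wk
  rw [Finset.sum_range_add]
  rfl

lemma ok_tail {A : Matrix (Fin n) (Fin n) (WithBot ℝ)} {p : ℕ → Fin n} {m t0 : ℕ}
    (h : t0 ≤ m) (hOK : OKw A p m) : OKw A (fun s => p (t0 + s)) (m - t0) := by
  intro s hs
  have := hOK (t0 + s) (by omega)
  simpa [Nat.add_assoc] using this

lemma ok_mono {A : Matrix (Fin n) (Fin n) (WithBot ℝ)} {p : ℕ → Fin n} {m m' : ℕ}
    (h : m' ≤ m) (hOK : OKw A p m) : OKw A p m' := fun t ht => hOK t (lt_of_lt_of_le ht h)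

lemma concat {A : Matrix (Fin n) (Fin n) (WithBot ℝ)} {p1 p2 : ℕ → Fin n} {m1 m2 : ℕ}
    (h : p1 m1 = p2 0) (h1 : OKw A p1 m1) (h2 : OKw A p2 m2) :
    ∃ q : ℕ → Fin n, (∀ t ≤ m1, q t = p1 t) ∧ (∀ t, q (m1 + t) = p2 t) ∧
      OKw A q (m1 + m2) ∧ wk A q (m1 + m2) = wk A p1 m1 + wk A p2 m2 := by
  set q : ℕ → Fin n := fun t => if t < m1 then p1 t else p2 (t - m1) with hq
  have hpre : ∀ t ≤ m1, q t = p1 t := by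
    intro t ht
    by_cases h' : t < m1
    · simp [hq, h']
    · have : t = m1 := by omega
      subst this
      simp [hq, h.symm]
  have hpost : ∀ t, q (m1 + t) = p2 t := by
    intro t
    simp only [hq, if_neg (by omega : ¬ (m1 + t < m1)), Nat.add_sub_cancel_left]
  have hedge : ∀ t, A (q (t + 1)) (q t)
      = if t < m1 then A (p1 (t + 1)) (p1 t) else A (p2 (t - m1 + 1)) (p2 (t - m1)) := by
    intro t
    by_cases h' : t < m1
    · rw [if_pos h', hpre t (by omega), hpre (t + 1) (by omega)]
    · rw [if_neg h']
      have e1 : t = m1 + (t - m1) := by omega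
      have e2 : t + 1 = m1 + (t - m1 + 1) := by omega
      have a1 : q t = p2 (t - m1) := by have := hpost (t - m1); rwa [← e1] at this
      have a2 : q (t + 1) = p2 (t - m1 + 1) := by have := hpost (t - m1 + 1); rwa [← e2] at this
      rw [a1, a2]
  refine ⟨q, hpre, hpost, ?_, ?_⟩
  · intro t ht
    rw [hedge t]
    by_cases h' : t < m1
    · simpa [h'] using h1 t h'
    · simpa [h'] using h2 (t - m1) (by omega)
  · unfold wk
    rw [Finset.sum_range_add]
    congr 1
    · refine Finset.sum_congr rfl fun t ht => ?_
      rw [Finset.mem_range] at ht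
      rw [hedge t, if_pos ht]
    · refine Finset.sum_congr rfl fun t ht => ?_
      rw [hedge (m1 + t), if_neg (by omega)]
      have e : m1 + t - m1 = t := by omega
      rw [e]

end MPAux

namespace MPAux

variable {n : ℕ}

lemma splice {A : Matrix (Fin n) (Fin n) (WithBot ℝ)} {p : ℕ → Fin n} {m t1 t2 : ℕ}
    (h12 : t1 < t2) (h2m : t2 ≤ m) (heq : p t1 = p t2) :
    ∃ q : ℕ → Fin n, (∀ t ≤ t1, q t = p t) ∧ q (m - (t2 - t1)) = p m ∧
      wk A p m = wk A q (m - (t2 - t1)) + wk A (fun s => p (t1 + s)) (t2 - t1) ∧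
      (OKw A p m → OKw A q (m - (t2 - t1))) ∧
      (∀ t, t1 ≤ t → q t = p (t + (t2 - t1))) := by
  set ℓ := t2 - t1 with hℓ
  set q : ℕ → Fin n := fun t => if t < t1 then p t else p (t + ℓ) with hq
  have hpre : ∀ t ≤ t1, q t = p t := by
    intro t ht
    by_cases h' : t < t1
    · simp [hq, h']
    · have h'' : t = t1 := by omega
      have e2 : t + ℓ = t2 := by omega
      calc q t = p (t + ℓ) := by simp [hq, h']
      _ = p t2 := by rw [e2]
      _ = p t := by rw [← heq, h'']
  have hhigh : ∀ t, t1 ≤ t → q t = p (t + ℓ) := by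
    intro t ht
    by_cases h' : t < t1
    · omega
    · simp [hq, h']
  have hend : q (m - ℓ) = p m := by
    rw [hhigh (m - ℓ) (by omega)]
    congr 1
    omega
  have hedge : ∀ t, A (q (t + 1)) (q t)
      = if t < t1 then A (p (t + 1)) (p t) else A (p (t + ℓ + 1)) (p (t + ℓ)) := by
    intro t
    by_cases h' : t < t1
    · rw [if_pos h', hpre t (by omega), hpre (t + 1) (by omega)]
    · rw [if_neg h', hhigh t (by omega), hhigh (t + 1) (by omega)]
      have e : t + 1 + ℓ = t + ℓ + 1 := by omega
      rw [e]
  have hwk : wk A p m = wk A q (m - ℓ) + wk A (fun s => p (t1 + s)) ℓ := by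
    have hsplit1 : wk A p m = wk A p t2 + wk A (fun s => p (t2 + s)) (m - t2) :=
      wk_split p h2m
    have hsplit2 : wk A p t2 = wk A p t1 + wk A (fun s => p (t1 + s)) ℓ := by
      have := wk_split (A := A) p (le_of_lt h12)
      simpa [hℓ] using this
    have hsplit3 : wk A q (m - ℓ) = wk A p t1 + wk A (fun s => p (t2 + s)) (m - t2) := by
      have h1m : t1 ≤ m - ℓ := by omega
      rw [wk_split q h1m]
      congr 1
      · exact wk_congr fun t ht => hpre t ht
      · have hlen : m - ℓ - t1 = m - t2 := by omega
        rw [hlen]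
        refine Finset.sum_congr rfl fun s hs => ?_
        rw [Finset.mem_range] at hs
        have e1 : (fun s => q (t1 + s)) (s + 1) = p (t2 + (s + 1)) := by
          show q (t1 + (s + 1)) = _
          rw [hhigh (t1 + (s + 1)) (by omega)]
          congr 1
          omega
        have e2 : (fun s => q (t1 + s)) s = p (t2 + s) := by
          show q (t1 + s) = _
          rw [hhigh (t1 + s) (by omega)]
          congr 1
          omega
        rw [e1, e2]
    rw [hsplit1, hsplit2, hsplit3]
    rw [add_assoc, add_assoc]
    congr 1
    exact add_comm _ _
  refine ⟨q, hpre, hend, hwk, ?_, fun t ht => (hℓ ▸ hhigh t ht)⟩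
  intro hOK t ht
  rw [hedge t]
  by_cases h' : t < t1
  · simpa [h'] using hOK t (by omega)
  · simpa [h'] using hOK (t + ℓ) (by omega)

lemma ok_loop {A : Matrix (Fin n) (Fin n) (WithBot ℝ)} {p : ℕ → Fin n} {m t1 t2 : ℕ}
    (h2m : t2 ≤ m) (hOK : OKw A p m) : OKw A (fun s => p (t1 + s)) (t2 - t1) := by
  intro s hs
  simpa [Nat.add_assoc] using hOK (t1 + s) (by omega)

lemma repeatWalk {A : Matrix (Fin n) (Fin n) (WithBot ℝ)} {γ : ℕ → Fin n} {e : ℕ} {u : Fin n}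
    (h0 : γ 0 = u) (he : γ e = u) (hOK : OKw A γ e) (hz : wk A γ e = 0) :
    ∀ r : ℕ, ∃ q : ℕ → Fin n, q 0 = u ∧ q (r * e) = u ∧ OKw A q (r * e) ∧ wk A q (r * e) = 0 := by
  intro r
  induction r with
  | zero => exact ⟨fun _ => u, rfl, rfl, fun t ht => absurd ht (by omega), by simp [wk]⟩
  | succ r ih =>
    obtain ⟨q, hq0, hqr, hqOK, hqw⟩ := ih
    obtain ⟨q', hpre0, hpost, hOK', hw'⟩ := concat (hqr.trans h0.symm) hqOK hOK
    have hlen : (r + 1) * e = r * e + e := by ring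
    refine ⟨q', ?_, ?_, ?_, ?_⟩
    · rw [hpre0 0 (Nat.zero_le _), hq0]
    · rw [hlen]; simpa [he] using hpost e
    · rw [hlen]; exact hOK'
    · rw [hlen, hw', hqw, hz]; simp

end MPAux

namespace MPAux

variable {n : ℕ}

lemma insertLoop {A : Matrix (Fin n) (Fin n) (WithBot ℝ)} {p : ℕ → Fin n} {m t0 : ℕ}
    (ht0 : t0 ≤ m) {γ : ℕ → Fin n} {e : ℕ} (hγ0 : γ 0 = p t0) (hγe : γ e = p t0)
    (hOKp : OKw A p m) (hOKγ : OKw A γ e) :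
    ∃ q : ℕ → Fin n, q 0 = p 0 ∧ q (m + e) = p m ∧ OKw A q (m + e) ∧
      wk A q (m + e) = wk A p m + wk A γ e := by
  have hOKpre : OKw A p t0 := ok_mono ht0 hOKp
  obtain ⟨q1, hq1pre, hq1post, hq1OK, hq1w⟩ := concat (hγ0.symm) hOKpre hOKγ
  have hq1end : q1 (t0 + e) = p t0 := by simpa [hγe] using hq1post e
  have hOKtail : OKw A (fun s => p (t0 + s)) (m - t0) := ok_tail ht0 hOKp
  obtain ⟨q, hqpre, hqpost, hqOK, hqw⟩ := concat (p2 := fun s => p (t0 + s))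
    (by simpa using hq1end) hq1OK hOKtail
  have hlen : t0 + e + (m - t0) = m + e := by omega
  refine ⟨q, ?_, ?_, ?_, ?_⟩
  · rw [hqpre 0 (Nat.zero_le _), hq1pre 0 (Nat.zero_le _)]
  · rw [← hlen]
    have := hqpost (m - t0)
    simp only [this]
    congr 1
    omega
  · rw [← hlen]; exact hqOK
  · rw [← hlen, hqw, hq1w, wk_split p ht0]
    rw [add_assoc, add_assoc]
    congr 1
    exact add_comm _ _

lemma multiSplice {A : Matrix (Fin n) (Fin n) (WithBot ℝ)} (hlam0 : IsMaxCycleMean A 0) :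
    ∀ (r : ℕ) (p : ℕ → Fin n) (m : ℕ) (t1 t2 : ℕ → ℕ) (ℓ : ℕ),
    OKw A p m →
    (∀ a < r, t1 a < t2 a ∧ t2 a ≤ m ∧ t2 a - t1 a = ℓ ∧ p (t1 a) = p (t2 a)) →
    (∀ a b, a < b → b < r → t2 a ≤ t1 b) →
    ∃ q : ℕ → Fin n, q 0 = p 0 ∧ q (m - r * ℓ) = p m ∧ OKw A q (m - r * ℓ) ∧
      wk A p m ≤ wk A q (m - r * ℓ) := by
  intro r
  induction r with
  | zero =>
    intro p m t1 t2 ℓ hOK _ _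
    exact ⟨p, rfl, by simp, by simpa using hOK, by simp⟩
  | succ r ih =>
    intro p m t1 t2 ℓ hOK hseg hsep
    obtain ⟨h12, h2m, hℓ, heq⟩ := hseg r (by omega)
    obtain ⟨q1, hq1pre, hq1end, hq1w, hq1OK, -⟩ := splice (A := A) h12 h2m heq
    rw [hℓ] at hq1end hq1w hq1OK
    have hloopOK : OKw A (fun s => p (t1 r + s)) (t2 r - t1 r) := ok_loop h2m hOK
    have hloople : wk A (fun s => p (t1 r + s)) (t2 r - t1 r) ≤ 0 := by
      have hc : (fun s => p (t1 r + s)) (t2 r - t1 r) = (fun s => p (t1 r + s)) 0 := by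
        show p (t1 r + (t2 r - t1 r)) = p (t1 r + 0)
        rw [show t1 r + (t2 r - t1 r) = t2 r by omega, Nat.add_zero]
        exact heq.symm
      have := closed_wk_le (p := fun s => p (t1 r + s)) (m := t2 r - t1 r) hlam0
        (by omega) hc hloopOK
      simpa using this
    rw [hℓ] at hloople
    have hple : wk A p m ≤ wk A q1 (m - ℓ) := by
      rw [hq1w]
      calc wk A q1 (m - ℓ) + wk A (fun s => p (t1 r + s)) ℓ
          ≤ wk A q1 (m - ℓ) + 0 := add_le_add_right hloople _
      _ = wk A q1 (m - ℓ) := by rw [add_zero]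
    have hq1OK' := hq1OK hOK
    have hsegs' : ∀ a < r, t1 a < t2 a ∧ t2 a ≤ m - ℓ ∧ t2 a - t1 a = ℓ ∧ q1 (t1 a) = q1 (t2 a) := by
      intro a ha
      obtain ⟨x1, x2, x3, x4⟩ := hseg a (by omega)
      have hb : t2 a ≤ t1 r := hsep a r ha (by omega)
      refine ⟨x1, by omega, x3, ?_⟩
      rw [hq1pre (t1 a) (by omega), hq1pre (t2 a) (by omega)]
      exact x4
    obtain ⟨q, hq0, hqend, hqOK, hqle⟩ := ih q1 (m - ℓ) t1 t2 ℓ hq1OK' hsegs'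
      (fun a b hab hbr => hsep a b hab (by omega))
    have hlen : m - ℓ - r * ℓ = m - (r + 1) * ℓ := by
      have : (r + 1) * ℓ = r * ℓ + ℓ := by ring
      omega
    refine ⟨q, by rw [hq0, hq1pre 0 (Nat.zero_le _)], by rw [← hlen, hqend, hq1end], ?_, ?_⟩
    · rw [← hlen]; exact hqOK
    · rw [← hlen]; exact le_trans hple hqle

end MPAux

namespace MPAux

variable {n : ℕ}

lemma removal (hn : 1 ≤ n) {A : Matrix (Fin n) (Fin n) (WithBot ℝ)}
    (hlam0 : IsMaxCycleMean A 0) (c : ℕ) (hc1 : 1 ≤ c)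
    (hc : ∀ ℓ, 1 ≤ ℓ → ℓ ≤ n → ℓ ∣ c) (k : ℕ) (hk : n * n * c ≤ k) (i j : Fin n) :
    mpPow A (k + c) i j ≤ mpPow A k i j := by
  rcases pow_attained hn A (k + c) i j with hbot | ⟨p, hp0, hpm, hw⟩
  · rw [hbot]; exact bot_le
  by_cases hbot : mpPow A (k + c) i j = ⊥
  · rw [hbot]; exact bot_le
  have hOK : OKw A p (k + c) := ok_of_wk_ne_bot (by rw [hw]; exact hbot)
  -- windows
  have hwin : ∀ s : ℕ, ∃ uv : ℕ × ℕ, s < n * c →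
      uv.1 < uv.2 ∧ uv.2 ≤ n ∧ p (s * n + uv.1) = p (s * n + uv.2) := by
    intro s
    by_cases hs : s < n * c
    · have : Fintype.card (Fin n) < Fintype.card (Fin (n + 1)) := by simp
      obtain ⟨a, b, hne, heq⟩ :=
        Fintype.exists_ne_map_eq_of_card_lt (fun a : Fin (n + 1) => p (s * n + a)) this
      have ha' := a.isLt
      have hb' := b.isLt
      rcases lt_or_gt_of_ne hne with hab | hab
      · exact ⟨((a : ℕ), (b : ℕ)), fun _ => ⟨hab, by omega, heq⟩⟩
      · exact ⟨((b : ℕ), (a : ℕ)), fun _ => ⟨hab, by omega, heq.symm⟩⟩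
    · exact ⟨(0, 1), fun h => absurd h hs⟩
  choose uv huv using hwin
  set u : ℕ → ℕ := fun s => (uv s).1 with hu
  set v : ℕ → ℕ := fun s => (uv s).2 with hv
  have huv' : ∀ s, s < n * c → u s < v s ∧ v s ≤ n ∧ p (s * n + u s) = p (s * n + v s) := huv
  -- pigeonhole on gap lengths
  have hmaps : ∀ s ∈ Finset.range (n * c), v s - u s ∈ Finset.Icc 1 n := by
    intro s hs
    rw [Finset.mem_range] at hs
    obtain ⟨h1, h2, _⟩ := huv' s hs
    rw [Finset.mem_Icc]
    omega
  have hcard : (Finset.Icc 1 n).card * c ≤ (Finset.range (n * c)).card := by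
    simp [Nat.card_Icc]
  obtain ⟨ℓ, hℓmem, hfib⟩ := Finset.exists_le_card_fiber_of_mul_le_card_of_maps_to hmaps
    ⟨1, Finset.mem_Icc.mpr ⟨le_rfl, hn⟩⟩ hcard
  rw [Finset.mem_Icc] at hℓmem
  set r := c / ℓ with hr
  have hrℓ : r * ℓ = c := Nat.div_mul_cancel (hc ℓ hℓmem.1 hℓmem.2)
  have hrc : r ≤ c := Nat.div_le_self c ℓ
  obtain ⟨F, hFsub, hFcard⟩ := Finset.exists_subset_card_eq
    (le_trans hrc hfib)
  set σ : ℕ → ℕ := fun a => if h : a < r then (F.orderIsoOfFin hFcard ⟨a, h⟩ : ℕ) else 0 with hσ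
  have hσmem : ∀ a < r, σ a ∈ F := by
    intro a ha
    simp only [hσ, dif_pos ha]
    exact (F.orderIsoOfFin hFcard ⟨a, ha⟩).2
  have hσprop : ∀ a < r, σ a < n * c ∧ v (σ a) - u (σ a) = ℓ := by
    intro a ha
    have := hFsub (hσmem a ha)
    rw [Finset.mem_filter, Finset.mem_range] at this
    exact this
  have hσmono : ∀ a b, a < b → b < r → σ a < σ b := by
    intro a b hab hbr
    simp only [hσ, dif_pos hbr, dif_pos (lt_trans hab hbr)]
    exact (F.orderIsoOfFin hFcard).strictMono (show (⟨a, lt_trans hab hbr⟩ : Fin r) < ⟨b, hbr⟩ from hab)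
  set t1 : ℕ → ℕ := fun a => σ a * n + u (σ a) with ht1
  set t2 : ℕ → ℕ := fun a => σ a * n + v (σ a) with ht2
  have hseg : ∀ a < r, t1 a < t2 a ∧ t2 a ≤ k + c ∧ t2 a - t1 a = ℓ ∧ p (t1 a) = p (t2 a) := by
    intro a ha
    obtain ⟨hs, hgap⟩ := hσprop a ha
    obtain ⟨h1, h2, h3⟩ := huv' (σ a) hs
    refine ⟨by simp only [ht1, ht2]; omega, ?_, by simp only [ht1, ht2]; omega, h3⟩
    have : σ a * n + v (σ a) ≤ n * c * n := by
      have : σ a + 1 ≤ n * c := hs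
      calc σ a * n + v (σ a) ≤ σ a * n + n := by omega
      _ = (σ a + 1) * n := by ring
      _ ≤ n * c * n := Nat.mul_le_mul_right n this
    have hnc : n * c * n ≤ k := by
      calc n * c * n = n * n * c := by ring
      _ ≤ k := hk
    simp only [ht2]
    omega
  have hsep : ∀ a b, a < b → b < r → t2 a ≤ t1 b := by
    intro a b hab hbr
    have h1 := hσmono a b hab hbr
    obtain ⟨hs, -⟩ := hσprop a (lt_trans hab hbr)
    obtain ⟨-, hvn, -⟩ := huv' (σ a) hs
    simp only [ht1, ht2]
    calc σ a * n + v (σ a) ≤ σ a * n + n := by omega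
    _ = (σ a + 1) * n := by ring
    _ ≤ σ b * n := Nat.mul_le_mul_right n h1
    _ ≤ σ b * n + u (σ b) := by omega
  obtain ⟨q, hq0, hqe, hqOK, hqle⟩ := multiSplice hlam0 r p (k + c) t1 t2 ℓ hOK hseg hsep
  have hlen : k + c - r * ℓ = k := by rw [hrℓ]; omega
  rw [hlen] at hqe hqOK hqle
  calc mpPow A (k + c) i j = wk A p (k + c) := hw.symm
  _ ≤ wk A q k := hqle
  _ ≤ mpPow A k (q k) (q 0) := wk_le_pow A q k
  _ = mpPow A k i j := by rw [hq0, hqe, hp0, hpm]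

end MPAux

namespace MPAux

variable {n : ℕ}

/-- `x` lies on a circuit of weight `0` and length at most `n`. -/
def Crit (A : Matrix (Fin n) (Fin n) (WithBot ℝ)) (x : Fin n) : Prop :=
  ∃ e : ℕ, 1 ≤ e ∧ e ≤ n ∧ ∃ γ : ℕ → Fin n,
    γ 0 = x ∧ γ e = x ∧ OKw A γ e ∧ wk A γ e = 0

/-- values of all walks of length at most `n` -/
noncomputable def shortT (A : Matrix (Fin n) (Fin n) (WithBot ℝ)) : Finset (WithBot ℝ) :=
  (Finset.range (n + 1)).biUnion fun m =>
    Finset.univ.image fun f : Fin (n + 1) → Fin n =>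
      wk A (fun t => f ⟨min t n, by omega⟩) m

lemma mem_shortT (hn : 1 ≤ n) (A : Matrix (Fin n) (Fin n) (WithBot ℝ)) (p : ℕ → Fin n) {m : ℕ}
    (hm : m ≤ n) : wk A p m ∈ shortT A := by
  rw [shortT, Finset.mem_biUnion]
  refine ⟨m, Finset.mem_range.mpr (by omega), ?_⟩
  rw [Finset.mem_image]
  refine ⟨fun a : Fin (n + 1) => p a, Finset.mem_univ _, ?_⟩
  refine wk_congr fun t ht => ?_
  have : min t n = t := by omega
  simp [this]

lemma shortT_nonempty (hn : 1 ≤ n) (A : Matrix (Fin n) (Fin n) (WithBot ℝ)) :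
    (shortT A).Nonempty :=
  ⟨wk A (fun _ => ⟨0, hn⟩) 0, mem_shortT hn A _ (by omega)⟩

noncomputable def M0 (hn : 1 ≤ n) (A : Matrix (Fin n) (Fin n) (WithBot ℝ)) : ℝ :=
  ((shortT A).image fun x => x.unbotD 0).max' ((shortT_nonempty hn A).image _)

lemma le_M0 (hn : 1 ≤ n) (A : Matrix (Fin n) (Fin n) (WithBot ℝ)) {x : WithBot ℝ}
    (hx : x ∈ shortT A) : x ≤ ((M0 hn A : ℝ) : WithBot ℝ) := by
  cases hxv : x with
  | bot => exact bot_le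
  | coe u =>
    have : u ≤ M0 hn A := by
      apply Finset.le_max'
      rw [Finset.mem_image]
      exact ⟨x, hx, by rw [hxv]; rfl⟩
    exact_mod_cast this

noncomputable def negβ (hn : 1 ≤ n) (A : Matrix (Fin n) (Fin n) (WithBot ℝ)) : ℝ :=
  if h : ((shortT A).filter fun x => ⊥ < x ∧ x < 0).Nonempty then
    (((shortT A).filter fun x => ⊥ < x ∧ x < 0).image fun x => x.unbotD 0).max' (h.image _)
  else -1

lemma negβ_neg (hn : 1 ≤ n) (A : Matrix (Fin n) (Fin n) (WithBot ℝ)) : negβ hn A < 0 := by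
  unfold negβ
  split_ifs with h
  · have hmem := Finset.max'_mem _ (h.image fun x => x.unbotD 0)
    rw [Finset.mem_image] at hmem
    obtain ⟨x, hx, hxe⟩ := hmem
    rw [Finset.mem_filter] at hx
    obtain ⟨-, hb, hneg⟩ := hx
    rw [← hxe]
    cases x with
    | bot => exact absurd hb (by simp)
    | coe u => exact_mod_cast hneg
  · norm_num

lemma le_negβ (hn : 1 ≤ n) (A : Matrix (Fin n) (Fin n) (WithBot ℝ)) {x : WithBot ℝ}
    (hx : x ∈ shortT A) (hb : ⊥ < x) (hneg : x < 0) :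
    x ≤ ((negβ hn A : ℝ) : WithBot ℝ) := by
  have hmem : x ∈ (shortT A).filter fun x => ⊥ < x ∧ x < 0 :=
    Finset.mem_filter.mpr ⟨hx, hb, hneg⟩
  unfold negβ
  rw [dif_pos ⟨x, hmem⟩]
  cases x with
  | bot => exact bot_le
  | coe u =>
    refine le_trans ?_ (WithBot.coe_le_coe.mpr (Finset.le_max' _ u
      (Finset.mem_image.mpr ⟨((u : ℝ) : WithBot ℝ), hmem, by simp⟩)))
    exact le_rfl

end MPAux

namespace MPAux

variable {n : ℕ}

lemma coe_add_coe (x y : ℝ) :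
    ((x : ℝ) : WithBot ℝ) + ((y : ℝ) : WithBot ℝ) = ((x + y : ℝ) : WithBot ℝ) := by
  exact_mod_cast rfl

lemma decay (hn : 1 ≤ n) {A : Matrix (Fin n) (Fin n) (WithBot ℝ)}
    (hlam0 : IsMaxCycleMean A 0) :
    ∀ m : ℕ, ∀ p : ℕ → Fin n, OKw A p m → (∀ t, t ≤ m → ¬ Crit A (p t)) →
      wk A p m ≤ ((M0 hn A - negβ hn A + negβ hn A * m / n : ℝ) : WithBot ℝ) := by
  intro m
  induction m using Nat.strong_induction_on with
  | _ m ih =>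
    intro p hOK hcrit
    have hβ := negβ_neg hn A
    have hnpos : (0 : ℝ) < n := by exact_mod_cast hn
    by_cases hm : m ≤ n
    · have h1 : wk A p m ≤ ((M0 hn A : ℝ) : WithBot ℝ) := le_M0 hn A (mem_shortT hn A p hm)
      refine le_trans h1 ?_
      have hmn : (m : ℝ) ≤ n := by exact_mod_cast hm
      have : M0 hn A ≤ M0 hn A - negβ hn A + negβ hn A * m / n := by
        have h2 : negβ hn A ≤ negβ hn A * m / n := by
          rw [le_div_iff₀ hnpos]
          nlinarith
        linarith
      exact_mod_cast this
    · push_neg at hm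
      -- find a repeat among p 0 .. p n
      have hcard : Fintype.card (Fin n) < Fintype.card (Fin (n + 1)) := by simp
      obtain ⟨a, b, hne, heqab⟩ :=
        Fintype.exists_ne_map_eq_of_card_lt (fun a : Fin (n + 1) => p a) hcard
      obtain ⟨t1, t2, h12, h2n, heq⟩ : ∃ t1 t2 : ℕ, t1 < t2 ∧ t2 ≤ n ∧ p t1 = p t2 := by
        have ha := a.isLt
        have hb := b.isLt
        rcases lt_or_gt_of_ne hne with h | h
        · exact ⟨a, b, h, by omega, heqab⟩
        · exact ⟨b, a, h, by omega, heqab.symm⟩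
      set ℓ := t2 - t1 with hℓdef
      have hℓ1 : 1 ≤ ℓ := by omega
      have hℓn : ℓ ≤ n := by omega
      have h2m : t2 ≤ m := by omega
      obtain ⟨hqpre, hqend, hqw, hqOK, hqhigh⟩ :=
        (splice (A := A) h12 h2m heq).choose_spec
      set q := (splice (A := A) h12 h2m heq).choose with hqdef
      set loop : ℕ → Fin n := fun s => p (t1 + s) with hloopdef
      have hloopOK : OKw A loop ℓ := by
        rw [hℓdef]; exact ok_loop h2m hOK
      have hloopcl : loop ℓ = loop 0 := by
        show p (t1 + ℓ) = p (t1 + 0)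
        rw [show t1 + ℓ = t2 by omega, Nat.add_zero]
        exact heq.symm
      have hloopshort : wk A loop ℓ ∈ shortT A := mem_shortT hn A loop hℓn
      have hloopne : wk A loop ℓ ≠ ⊥ := by
        rw [wk_eq_coe hloopOK]
        exact WithBot.coe_ne_bot
      have hloople : wk A loop ℓ ≤ 0 := by
        have := closed_wk_le hlam0 hℓ1 hloopcl hloopOK
        simpa using this
      have hloopne0 : wk A loop ℓ ≠ 0 := by
        intro h0
        exact hcrit t1 (by omega) ⟨ℓ, hℓ1, hℓn, loop, rfl, hloopcl.trans rfl, hloopOK, h0⟩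
      have hloopβ : wk A loop ℓ ≤ ((negβ hn A : ℝ) : WithBot ℝ) :=
        le_negβ hn A hloopshort (lt_of_le_of_ne bot_le (Ne.symm hloopne)) (lt_of_le_of_ne hloople hloopne0)
      have hqcrit : ∀ t, t ≤ m - ℓ → ¬ Crit A (q t) := by
        intro t ht
        by_cases h' : t ≤ t1
        · rw [hqpre t h']; exact hcrit t (by omega)
        · rw [hqhigh t (by omega)]; exact hcrit (t + ℓ) (by omega)
      have hIH := ih (m - ℓ) (by omega) q (hqOK hOK) hqcrit
      rw [hqw]
      calc wk A q (m - ℓ) + wk A loop ℓ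
          ≤ ((M0 hn A - negβ hn A + negβ hn A * (m - ℓ : ℕ) / n : ℝ) : WithBot ℝ)
            + ((negβ hn A : ℝ) : WithBot ℝ) := add_le_add hIH hloopβ
      _ = ((M0 hn A - negβ hn A + negβ hn A * (m - ℓ : ℕ) / n + negβ hn A : ℝ) : WithBot ℝ) :=
            coe_add_coe _ _
      _ ≤ ((M0 hn A - negβ hn A + negβ hn A * m / n : ℝ) : WithBot ℝ) := by
            have hcast : ((m - ℓ : ℕ) : ℝ) = (m : ℝ) - ℓ := by
              rw [Nat.cast_sub (by omega)]
            have hℓn' : (ℓ : ℝ) ≤ n := by exact_mod_cast hℓn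
            have key : negβ hn A * ((m : ℝ) - ℓ) / n + negβ hn A ≤ negβ hn A * m / n := by
              rw [div_add' _ _ _ (ne_of_gt hnpos), div_le_div_iff₀ hnpos hnpos]
              have h3 : negβ hn A * ((n : ℝ) - ℓ) ≤ 0 :=
                mul_nonpos_of_nonpos_of_nonneg (le_of_lt hβ) (by linarith)
              have h4 : negβ hn A * ((n : ℝ) - ℓ) * n ≤ 0 :=
                mul_nonpos_of_nonpos_of_nonneg h3 (le_of_lt hnpos)
              nlinarith [h4]
            have hgoal : M0 hn A - negβ hn A + negβ hn A * (m - ℓ : ℕ) / n + negβ hn A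
                ≤ M0 hn A - negβ hn A + negβ hn A * m / n := by
              rw [hcast]
              linarith
            exact_mod_cast hgoal

end MPAux

namespace MPAux

variable {n : ℕ}

lemma repeatWalk' {A : Matrix (Fin n) (Fin n) (WithBot ℝ)} {γ : ℕ → Fin n} {e : ℕ} {u : Fin n}
    (h0 : γ 0 = u) (he : γ e = u) (hOK : OKw A γ e) :
    ∀ r : ℕ, ∃ q : ℕ → Fin n, q 0 = u ∧ q (r * e) = u ∧ OKw A q (r * e) := by
  intro r
  induction r with
  | zero => exact ⟨fun _ => u, rfl, rfl, fun t ht => absurd ht (by omega)⟩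
  | succ r ih =>
    obtain ⟨q, hq0, hqr, hqOK⟩ := ih
    obtain ⟨q', hpre0, hpost, hOK', -⟩ := concat (hqr.trans h0.symm) hqOK hOK
    have hlen : (r + 1) * e = r * e + e := by ring
    refine ⟨q', by rw [hpre0 0 (Nat.zero_le _), hq0], ?_, by rw [hlen]; exact hOK'⟩
    rw [hlen]
    simpa [he] using hpost e

lemma lower_bound (hn : 1 ≤ n) {A : Matrix (Fin n) (Fin n) (WithBot ℝ)} (hA : MPIrreducible A)
    {ζ : ℕ → Fin n} {d : ℕ} (hd : 1 ≤ d) (hζc : ζ d = ζ 0) (hζOK : OKw A ζ d)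
    (hζw : wk A ζ d = 0) {c : ℕ} (hdc : d ∣ c) (i j : Fin n) :
    ∃ K : ℕ, ∃ L : ℝ, ∀ k, K ≤ k → mpPow A k i j ≠ ⊥ →
      ((L : ℝ) : WithBot ℝ) ≤ mpPow A (k + c) i j := by
  set v := ζ 0 with hv
  obtain ⟨a, ha1, P, hP0, hPa, hPOK⟩ := hA v j
  obtain ⟨b, hb1, R, hR0, hRb, hROK⟩ := hA i v
  obtain ⟨qq, hq1, Q, hQ0, hQq, hQOK⟩ := hA v i
  obtain ⟨ss, hs1, S, hS0, hSs, hSOK⟩ := hA j v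
  classical
  -- stock of closed walks at v, one for each achievable residue mod d
  set Good : ℕ → Prop := fun ρ => ∃ x : ℕ, x % d = ρ ∧ ∃ γ : ℕ → Fin n,
    γ 0 = v ∧ γ x = v ∧ OKw A γ x with hGood
  have hstock : ∀ ρ : ℕ, ∃ x : ℕ, ∃ γ : ℕ → Fin n,
      Good ρ → x % d = ρ ∧ γ 0 = v ∧ γ x = v ∧ OKw A γ x := by
    intro ρ
    by_cases h : Good ρ
    · obtain ⟨x, hx, γ, h1, h2, h3⟩ := h
      exact ⟨x, γ, fun _ => ⟨hx, h1, h2, h3⟩⟩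
    · exact ⟨0, fun _ => v, fun hg => absurd hg h⟩
  choose x γ hxγ using hstock
  set X := (Finset.range d).sup x with hX
  set Ω := (Finset.range d).inf' ⟨0, Finset.mem_range.mpr (by omega)⟩
    (fun ρ => wkR A (γ ρ) (x ρ)) with hΩ
  refine ⟨a + b + X, wkR A P a + wkR A R b + Ω, ?_⟩
  intro k hK hne
  rcases pow_attained hn A k i j with hbot | ⟨W, hW0, hWk, hWw⟩
  · exact absurd hbot hne
  have hWOK : OKw A W k := ok_of_wk_ne_bot (by rw [hWw]; exact hne)
  -- a closed walk at v of length ss + k + qq + (d-1)*(ss+a) + (d-1)*(b+qq)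
  obtain ⟨U1, hU1pre, hU1post, hU1OK, -⟩ := concat (hSs.trans hW0.symm) hSOK hWOK
  have hU1end : U1 (ss + k) = i := by rw [hU1post k, hWk]
  obtain ⟨U2, hU2pre, hU2post, hU2OK, -⟩ := concat (hU1end.trans hQ0.symm) hU1OK hQOK
  have hU2start : U2 0 = v := by rw [hU2pre 0 (Nat.zero_le _), hU1pre 0 (Nat.zero_le _), hS0]
  have hU2end : U2 (ss + k + qq) = v := by rw [hU2post qq, hQq]
  obtain ⟨C1, hC1pre, hC1post, hC1OK, -⟩ := concat (hSs.trans hP0.symm) hSOK hPOK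
  have hC1start : C1 0 = v := by rw [hC1pre 0 (Nat.zero_le _), hS0]
  have hC1end : C1 (ss + a) = v := by rw [hC1post a, hPa]
  obtain ⟨C2, hC2pre, hC2post, hC2OK, -⟩ := concat (hRb.trans hQ0.symm) hROK hQOK
  have hC2start : C2 0 = v := by rw [hC2pre 0 (Nat.zero_le _), hR0]
  have hC2end : C2 (b + qq) = v := by rw [hC2post qq, hQq]
  obtain ⟨V1, hV10, hV1e, hV1OK⟩ := repeatWalk' hC1start hC1end hC1OK (d - 1)
  obtain ⟨V2, hV20, hV2e, hV2OK⟩ := repeatWalk' hC2start hC2end hC2OK (d - 1)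
  obtain ⟨Sg1, hSg1pre, hSg1post, hSg1OK, -⟩ := concat (hU2end.trans hV10.symm) hU2OK hV1OK
  have hSg1start : Sg1 0 = v := by rw [hSg1pre 0 (Nat.zero_le _), hU2start]
  have hSg1end : Sg1 (ss + k + qq + (d - 1) * (ss + a)) = v := by rw [hSg1post, hV1e]
  obtain ⟨Sg2, hSg2pre, hSg2post, hSg2OK, -⟩ := concat (hSg1end.trans hV20.symm) hSg1OK hV2OK
  have hSg2start : Sg2 0 = v := by rw [hSg2pre 0 (Nat.zero_le _), hSg1start]
  set σlen := ss + k + qq + (d - 1) * (ss + a) + (d - 1) * (b + qq) with hσlen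
  have hSg2end : Sg2 σlen = v := by rw [hσlen, hSg2post, hV2e]
  set ρ := σlen % d with hρ
  have hρd : ρ < d := Nat.mod_lt _ (by omega)
  have hGoodρ : Good ρ := ⟨σlen, rfl, Sg2, hSg2start, hSg2end, hSg2OK⟩
  obtain ⟨hxρ, hγ0, hγx, hγOK⟩ := hxγ ρ hGoodρ
  -- the target length z
  set z := k + c - (a + b) with hz
  have hab : a + b ≤ k := by
    have : X ≥ 0 := Nat.zero_le X
    omega
  -- z ≡ σlen [MOD d]
  have hzmod : z % d = ρ := by
    obtain ⟨d', rfl⟩ : ∃ d', d = d' + 1 := ⟨d - 1, by omega⟩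
    obtain ⟨c', rfl⟩ := hdc
    have hsum : σlen + (a + b) = k + (d' + 1) * (ss + a) + (d' + 1) * (b + qq) := by
      rw [hσlen]
      simp only [Nat.add_sub_cancel]
      ring
    have h1 : (σlen + (a + b)) % (d' + 1) = k % (d' + 1) := by
      rw [hsum, Nat.add_mul_mod_self_left, Nat.add_mul_mod_self_left]
    have h2 : (z + (a + b)) % (d' + 1) = k % (d' + 1) := by
      have : z + (a + b) = k + (d' + 1) * c' := by omega
      rw [this, Nat.add_mul_mod_self_left]
    have h3 : (z + (a + b)) % (d' + 1) = (σlen + (a + b)) % (d' + 1) := by rw [h1, h2]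
    have h4 : z ≡ σlen [MOD d' + 1] := Nat.ModEq.add_right_cancel' (a + b) h3
    exact h4
  have hxX : x ρ ≤ X := Finset.le_sup (Finset.mem_range.mpr hρd)
  have hxz : x ρ ≤ z := by omega
  have hdvd : d ∣ z - x ρ := by
    have : x ρ ≡ z [MOD d] := by
      show x ρ % d = z % d
      rw [hxρ, hzmod]
    exact (Nat.modEq_iff_dvd' hxz).mp this
  obtain ⟨m₀, hm₀⟩ := hdvd
  rw [Nat.mul_comm] at hm₀
  set y := m₀ * d with hy
  have hzy : z = x ρ + y := by omega
  -- build the final walk : P ++ γ ρ ++ (m₀ copies of ζ) ++ R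
  obtain ⟨Z, hZ0, hZe, hZOK, hZw⟩ := repeatWalk (rfl : ζ 0 = v) hζc hζOK hζw m₀
  obtain ⟨F1, hF1pre, hF1post, hF1OK, hF1w⟩ := concat (hPa.trans hγ0.symm) hPOK hγOK
  have hF1end : F1 (a + x ρ) = v := by rw [hF1post, hγx]
  obtain ⟨F2, hF2pre, hF2post, hF2OK, hF2w⟩ := concat (hF1end.trans hZ0.symm) hF1OK hZOK
  have hF2end : F2 (a + x ρ + y) = v := by rw [hF2post, hZe]
  obtain ⟨F3, hF3pre, hF3post, hF3OK, hF3w⟩ := concat (hF2end.trans hR0.symm) hF2OK hROK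
  have hF3start : F3 0 = j := by
    rw [hF3pre 0 (Nat.zero_le _), hF2pre 0 (Nat.zero_le _), hF1pre 0 (Nat.zero_le _), hP0]
  have hF3end : F3 (a + x ρ + y + b) = i := by rw [hF3post, hRb]
  have hlen : a + x ρ + y + b = k + c := by omega
  have hwval : wk A F3 (a + x ρ + y + b)
      = ((wkR A P a + wkR A (γ ρ) (x ρ) + wkR A R b : ℝ) : WithBot ℝ) := by
    rw [hF3w, hF2w, hF1w, hZw, wk_eq_coe hPOK, wk_eq_coe hγOK, wk_eq_coe hROK]
    rw [add_zero, coe_add_coe, coe_add_coe]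
  have hΩle : Ω ≤ wkR A (γ ρ) (x ρ) :=
    Finset.inf'_le _ (Finset.mem_range.mpr hρd)
  calc ((wkR A P a + wkR A R b + Ω : ℝ) : WithBot ℝ)
      ≤ ((wkR A P a + wkR A (γ ρ) (x ρ) + wkR A R b : ℝ) : WithBot ℝ) := by
        apply WithBot.coe_le_coe.mpr
        linarith
  _ = wk A F3 (a + x ρ + y + b) := hwval.symm
  _ ≤ mpPow A (a + x ρ + y + b) (F3 (a + x ρ + y + b)) (F3 0) := wk_le_pow A F3 _
  _ = mpPow A (k + c) i j := by rw [hF3end, hF3start, hlen]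

end MPAux

namespace MPAux

variable {n : ℕ}

lemma insertion (hn : 1 ≤ n) {A : Matrix (Fin n) (Fin n) (WithBot ℝ)} (hA : MPIrreducible A)
    (hlam0 : IsMaxCycleMean A 0) {ζ : ℕ → Fin n} {d : ℕ} (hd : 1 ≤ d) (hζc : ζ d = ζ 0)
    (hζOK : OKw A ζ d) (hζw : wk A ζ d = 0) {c : ℕ} (hdc : d ∣ c)
    (hfac : ∀ e, 1 ≤ e → e ≤ n → e ∣ c) (i j : Fin n) :
    ∃ K1 : ℕ, ∀ k, K1 ≤ k → mpPow A k i j ≤ mpPow A (k + c) i j := by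
  obtain ⟨K, L, hKL⟩ := lower_bound hn hA hd hζc hζOK hζw hdc i j
  set M := M0 hn A with hM
  set β := negβ hn A with hβdef
  have hβ : β < 0 := negβ_neg hn A
  have hnpos : (0 : ℝ) < n := by exact_mod_cast hn
  set K2 := Nat.ceil ((n : ℝ) * (L - M + β) / β) with hK2
  refine ⟨max K K2, fun k hk => ?_⟩
  have hkK : K ≤ k := le_trans (le_max_left _ _) hk
  have hkK2 : K2 ≤ k := le_trans (le_max_right _ _) hk
  by_cases hbot : mpPow A k i j = ⊥
  · rw [hbot]; exact bot_le
  rcases pow_attained hn A k i j with h | ⟨W, hW0, hWk, hWw⟩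
  · exact absurd h hbot
  have hWOK : OKw A W k := ok_of_wk_ne_bot (by rw [hWw]; exact hbot)
  by_cases hcase : ∃ t, t ≤ k ∧ Crit A (W t)
  · obtain ⟨t0, ht0, e, he1, hen, γ, hγ0, hγe, hγOK, hγw⟩ := hcase
    set r := c / e with hr
    have hre : r * e = c := Nat.div_mul_cancel (hfac e he1 hen)
    obtain ⟨Z, hZ0, hZe, hZOK, hZw⟩ := repeatWalk hγ0 hγe hγOK hγw r
    obtain ⟨q, hq0, hqe, hqOK, hqw⟩ := insertLoop ht0 hZ0 hZe hWOK hZOK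
    calc mpPow A k i j = wk A W k := hWw.symm
    _ = wk A W k + 0 := by rw [add_zero]
    _ = wk A q (k + r * e) := by rw [hqw, hZw]
    _ ≤ mpPow A (k + r * e) (q (k + r * e)) (q 0) := wk_le_pow A q _
    _ = mpPow A (k + c) i j := by rw [hqe, hq0, hW0, hWk, hre]
  · push_neg at hcase
    have hdec := decay hn hlam0 k W hWOK hcase
    have hLle : ((L : ℝ) : WithBot ℝ) ≤ mpPow A (k + c) i j := hKL k hkK hbot
    have hthresh : M - β + β * (k : ℝ) / n ≤ L := by
      have hkR : ((n : ℝ) * (L - M + β) / β) ≤ (k : ℝ) := by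
        calc ((n : ℝ) * (L - M + β) / β) ≤ (K2 : ℝ) := Nat.le_ceil _
        _ ≤ (k : ℝ) := by exact_mod_cast hkK2
      have h1 : β * (k : ℝ) ≤ β * ((n : ℝ) * (L - M + β) / β) :=
        mul_le_mul_of_nonpos_left hkR (le_of_lt hβ)
      have h2 : β * ((n : ℝ) * (L - M + β) / β) = (n : ℝ) * (L - M + β) :=
        mul_div_cancel₀ _ (ne_of_lt hβ)
      have h3 : β * (k : ℝ) / n ≤ L - M + β := by
        rw [div_le_iff₀ hnpos]
        nlinarith
      linarith
    calc mpPow A k i j = wk A W k := hWw.symm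
    _ ≤ ((M - β + β * (k : ℝ) / n : ℝ) : WithBot ℝ) := hdec
    _ ≤ ((L : ℝ) : WithBot ℝ) := by exact_mod_cast hthresh
    _ ≤ mpPow A (k + c) i j := hLle

end MPAux

namespace MPAux

variable {n : ℕ}

lemma mainB (hn : 1 ≤ n) {B : Matrix (Fin n) (Fin n) (WithBot ℝ)} (hB : MPIrreducible B)
    (hlam0 : IsMaxCycleMean B 0) :
    ∃ c, 1 ≤ c ∧ ∃ l, ∀ k, l ≤ k → ∀ i j, mpPow B (k + c) i j = mpPow B k i j := by
  obtain ⟨d, hd, ζ, w, hζc, hζentry, hmean⟩ := hlam0.1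
  have hζOK : OKw B ζ d := fun t ht => by rw [hζentry t ht]; exact WithBot.coe_ne_bot
  have hdR : (0 : ℝ) < d := by exact_mod_cast hd
  have hsum : ∑ t ∈ Finset.range d, w t = 0 := by
    have := hmean.symm
    rwa [div_eq_iff (ne_of_gt hdR), zero_mul] at this
  have hζw : wk B ζ d = 0 := by
    unfold wk
    rw [Finset.sum_congr rfl fun t ht => hζentry t (Finset.mem_range.mp ht)]
    rw [show (0 : WithBot ℝ) = ((0 : ℝ) : WithBot ℝ) from rfl, ← hsum]
    push_cast
    rfl
  set c := d * n.factorial with hc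
  have hc1 : 1 ≤ c := Nat.mul_le_mul hd (Nat.one_le_iff_ne_zero.mpr (Nat.factorial_ne_zero n))
  have hdc : d ∣ c := dvd_mul_right d _
  have hfac : ∀ e, 1 ≤ e → e ≤ n → e ∣ c := fun e he hen =>
    Dvd.dvd.mul_left (Nat.dvd_factorial he hen) d
  have hins : ∀ ij : Fin n × Fin n, ∃ K1 : ℕ, ∀ k, K1 ≤ k →
      mpPow B k ij.1 ij.2 ≤ mpPow B (k + c) ij.1 ij.2 := fun ij =>
    insertion hn hB hlam0 hd hζc hζOK hζw hdc hfac ij.1 ij.2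
  choose K1 hK1 using hins
  refine ⟨c, hc1, n * n * c + Finset.univ.sup K1, fun k hk i j => ?_⟩
  have h1 : n * n * c ≤ k := by omega
  have h2 : K1 (i, j) ≤ k := by
    have := Finset.le_sup (f := K1) (Finset.mem_univ (i, j))
    omega
  exact le_antisymm (removal hn hlam0 c hc1 hfac k h1 i j) (hK1 (i, j) k h2)

lemma add_coe_cancel (x : WithBot ℝ) (r : ℝ) :
    (x + ((-r : ℝ) : WithBot ℝ)) + ((r : ℝ) : WithBot ℝ) = x := by
  cases x <;> simp [← WithBot.coe_add]

lemma max_add_coe (a b : WithBot ℝ) (r : ℝ) :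
    (a ⊔ b) + ((r : ℝ) : WithBot ℝ) = (a + ↑r) ⊔ (b + ↑r) := by
  rcases le_total a b with h | h
  · rw [sup_eq_right.mpr h, sup_eq_right.mpr (add_le_add_left h _)]
  · rw [sup_eq_left.mpr h, sup_eq_left.mpr (add_le_add_left h _)]

lemma sup_add_coe (f : Fin n → WithBot ℝ) (r : ℝ) :
    (Finset.univ.sup fun u => f u + ((r : ℝ) : WithBot ℝ))
      = Finset.univ.sup f + ((r : ℝ) : WithBot ℝ) := by
  rw [Finset.comp_sup_eq_sup_comp (fun x : WithBot ℝ => x + ((r : ℝ) : WithBot ℝ))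
    (fun x y => max_add_coe x y r) (by simp)]
  rfl

lemma pow_shift (A : Matrix (Fin n) (Fin n) (WithBot ℝ)) (lam : ℝ) :
    ∀ k i j, mpPow (fun i j => A i j + ((-lam : ℝ) : WithBot ℝ)) k i j
      = mpPow A k i j + ((-(lam * k) : ℝ) : WithBot ℝ) := by
  intro k
  induction k with
  | zero =>
    intro i j
    show mpId n i j = mpPow A 0 i j + _
    norm_num
    rfl
  | succ k ih =>
    intro i j
    show (Finset.univ.sup fun u => (A i u + ((-lam : ℝ) : WithBot ℝ))
        + mpPow (fun i j => A i j + ((-lam : ℝ) : WithBot ℝ)) k u j) = _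
    have hre : ∀ u, (A i u + ((-lam : ℝ) : WithBot ℝ))
        + mpPow (fun i j => A i j + ((-lam : ℝ) : WithBot ℝ)) k u j
        = (A i u + mpPow A k u j) + ((-(lam * (k + 1 : ℕ)) : ℝ) : WithBot ℝ) := by
      intro u
      rw [ih u j, add_add_add_comm, coe_add_coe]
      congr 2
      push_cast
      ring
    rw [Finset.sup_congr rfl fun u _ => hre u, sup_add_coe]
    rfl

lemma shifted_ne_bot (A : Matrix (Fin n) (Fin n) (WithBot ℝ)) (lam : ℝ) (i j : Fin n) :
    A i j + ((-lam : ℝ) : WithBot ℝ) ≠ ⊥ ↔ A i j ≠ ⊥ := by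
  rw [ne_eq, WithBot.add_eq_bot]
  simp

lemma irr_shift {A : Matrix (Fin n) (Fin n) (WithBot ℝ)} (lam : ℝ) (hA : MPIrreducible A) :
    MPIrreducible (fun i j => A i j + ((-lam : ℝ) : WithBot ℝ)) := by
  intro i j
  obtain ⟨m, hm, p, h0, hme, hOK⟩ := hA i j
  exact ⟨m, hm, p, h0, hme, fun t ht => (shifted_ne_bot A lam _ _).mpr (hOK t ht)⟩

lemma maxcyc_shift {A : Matrix (Fin n) (Fin n) (WithBot ℝ)} {lam : ℝ}
    (hlam : IsMaxCycleMean A lam) :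
    IsMaxCycleMean (fun i j => A i j + ((-lam : ℝ) : WithBot ℝ)) 0 := by
  constructor
  · obtain ⟨m, hm, p, w, hc, hent, hmean⟩ := hlam.1
    have hmR : (0 : ℝ) < m := by exact_mod_cast hm
    refine ⟨m, hm, p, fun t => w t - lam, hc, ?_, ?_⟩
    · intro t ht
      show A (p (t + 1)) (p t) + _ = _
      rw [hent t ht, coe_add_coe]
      norm_num [sub_eq_add_neg]
    · have hm' : lam * m = ∑ t ∈ Finset.range m, w t := by
        rw [hmean]
        field_simp
      rw [Finset.sum_sub_distrib, Finset.sum_const, Finset.card_range,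
        eq_div_iff (ne_of_gt hmR), nsmul_eq_mul]
      push_cast
      linarith [hm']
  · intro μ hμ
    obtain ⟨m, hm, p, w, hc, hent, hmean⟩ := hμ
    have hmR : (0 : ℝ) < m := by exact_mod_cast hm
    have hA : IsCycleMean A (μ + lam) := by
      refine ⟨m, hm, p, fun t => w t + lam, hc, ?_, ?_⟩
      · intro t ht
        have h1 := hent t ht
        have h2 : A (p (t + 1)) (p t) + ((-lam : ℝ) : WithBot ℝ) = ((w t : ℝ) : WithBot ℝ) := h1
        have h3 := congrArg (fun x => x + ((lam : ℝ) : WithBot ℝ)) h2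
        simp only [add_coe_cancel] at h3
        rw [h3, coe_add_coe]
      · have hm' : μ * m = ∑ t ∈ Finset.range m, w t := by
          rw [hmean]
          field_simp
        rw [Finset.sum_add_distrib, Finset.sum_const, Finset.card_range,
          eq_div_iff (ne_of_gt hmR), nsmul_eq_mul]
        push_cast
        linarith [hm']
    have := hlam.2 _ hA
    linarith

end MPAux


/-- Transient and cyclicity of an irreducible max-plus matrix: there are
`l ≥ 0` and `c ≥ 1` with `A^⊗(k+c) = λ(A)·c ⊗ A^⊗k` entrywise for `k ≥ l`. -/
theorem irreducible_transient_cyclicity {n : ℕ} (hn : 1 ≤ n)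
    (A : Matrix (Fin n) (Fin n) (WithBot ℝ)) (hA : MPIrreducible A)
    (lam : ℝ) (hlam : IsMaxCycleMean A lam) :
    ∃ l : ℕ, ∃ c : ℕ, 1 ≤ c ∧ ∀ k : ℕ, l ≤ k → ∀ i j : Fin n,
      mpPow A (k + c) i j = ((lam * (c : ℝ) : ℝ) : WithBot ℝ) + mpPow A k i j := by
  obtain ⟨c, hc1, l, hmain⟩ := MPAux.mainB hn (MPAux.irr_shift lam hA) (MPAux.maxcyc_shift hlam)
  refine ⟨l, c, hc1, fun k hk i j => ?_⟩
  have h1 := hmain k hk i j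
  rw [MPAux.pow_shift A lam (k + c) i j, MPAux.pow_shift A lam k i j] at h1
  have h2 := congrArg (fun x => x + ((lam * ((k + c : ℕ) : ℝ) : ℝ) : WithBot ℝ)) h1
  beta_reduce at h2
  rw [MPAux.add_coe_cancel] at h2
  rw [h2, add_assoc, MPAux.coe_add_coe,
    show (-(lam * ((k : ℕ) : ℝ)) + lam * (((k + c : ℕ) : ℕ) : ℝ)) = lam * (c : ℝ) by
      push_cast; ring,
    add_comm]
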